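/- For d ≥ 3 and ε > 0, λ^d({x ∈ B̄₁(0) : |x₁| > ε}) / λ^d(B̄₁(0)) ≤ (2/(ε√(d-1)))·exp(-ε²(d-1)/2). -/

import Mathlib

open MeasureTheory Metric Set Filter

/-! Slicing the unit ball of `ℝ^(m+1)` perpendicular to the first axis, the slice at height `t`
is an `m`-ball of radius `√(1 - t²)`, so every such region has volume `V_m ∫ √(1 - t²)^m dt`.
On the cap `t > ε` use `√(1 - t²)^m ≤ exp(-m t²/2) ≤ (t/ε) exp(-m t²/2)`, which integrates in
closed form. For the whole ball keep only `|t| ≤ 1/√(2m)`, where Bernoulli's inequality gives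
`√(1 - t²)^m ≥ 1/√2`: the ball has volume at least `V_m/√m`. -/

noncomputable def splitFirstCoord (m : ℕ) :
    EuclideanSpace ℝ (Fin (m + 1)) ≃ᵐ ℝ × EuclideanSpace ℝ (Fin m) :=
  (MeasurableEquiv.toLp 2 (Fin (m + 1) → ℝ)).symm.trans <|
    (MeasurableEquiv.piFinSuccAbove (fun _ => ℝ) 0).trans <|
      (MeasurableEquiv.refl ℝ).prodCongr (MeasurableEquiv.toLp 2 (Fin m → ℝ))

theorem measurePreserving_splitFirstCoord (m : ℕ) :
    MeasurePreserving (splitFirstCoord m) volume volume :=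
  (((MeasurePreserving.id volume).prod
      (EuclideanSpace.volume_preserving_symm_measurableEquiv_toLp (Fin m)).symm).comp
    (volume_preserving_piFinSuccAbove (fun _ => ℝ) 0)).comp
    (EuclideanSpace.volume_preserving_symm_measurableEquiv_toLp (Fin (m + 1)))

theorem splitFirstCoord_fst (m : ℕ) (x : EuclideanSpace ℝ (Fin (m + 1))) :
    (splitFirstCoord m x).1 = x 0 := rfl

theorem sq_add_norm_sq_splitFirstCoord (m : ℕ) (x : EuclideanSpace ℝ (Fin (m + 1))) :
    (splitFirstCoord m x).1 ^ 2 + ‖(splitFirstCoord m x).2‖ ^ 2 = ‖x‖ ^ 2 := by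
  simp only [EuclideanSpace.norm_sq_eq, Fin.sum_univ_succ (n := m), Real.norm_eq_abs, sq_abs]
  rfl

theorem volume_setOf_norm_sq_le {m : ℕ} (hm : m ≠ 0) (c : ℝ) :
    volume {y : EuclideanSpace ℝ (Fin m) | ‖y‖ ^ 2 ≤ c}
      = ENNReal.ofReal (√c ^ m) * volume (ball (0 : EuclideanSpace ℝ (Fin m)) 1) := by
  rcases le_or_gt 0 c with hc | hc
  · have : {y : EuclideanSpace ℝ (Fin m) | ‖y‖ ^ 2 ≤ c} = closedBall 0 √c := by
      ext y
      rw [mem_ofPred_eq, mem_closedBall_zero_iff, Real.le_sqrt (norm_nonneg y) hc]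
    rw [this, Measure.addHaar_closedBall _ _ (Real.sqrt_nonneg c), finrank_euclideanSpace_fin]
  · have : {y : EuclideanSpace ℝ (Fin m) | ‖y‖ ^ 2 ≤ c} = ∅ :=
      eq_empty_of_forall_notMem fun y hy => (hc.trans_le (sq_nonneg ‖y‖)).not_ge hy
    rw [this, Real.sqrt_eq_zero_of_nonpos hc.le, zero_pow hm, measure_empty,
      ENNReal.ofReal_zero, zero_mul]

theorem volume_firstCoord_mem_inter_unitBall {m : ℕ} (hm : m ≠ 0) {s : Set ℝ}
    (hs : MeasurableSet s) :
    volume {x : EuclideanSpace ℝ (Fin (m + 1)) | x 0 ∈ s ∧ ‖x‖ ≤ 1}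
      = ∫⁻ t in s, ENNReal.ofReal (√(1 - t ^ 2) ^ m)
          * volume (ball (0 : EuclideanSpace ℝ (Fin m)) 1) := by
  set A : Set (ℝ × EuclideanSpace ℝ (Fin m)) := {p | p.1 ∈ s ∧ ‖p.2‖ ^ 2 ≤ 1 - p.1 ^ 2}
  have hA : MeasurableSet A :=
    (measurable_fst hs).inter (measurableSet_le (measurable_snd.norm.pow_const 2)
      (measurable_const.sub (measurable_fst.pow_const 2)))
  have hpre : {x : EuclideanSpace ℝ (Fin (m + 1)) | x 0 ∈ s ∧ ‖x‖ ≤ 1}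
      = splitFirstCoord m ⁻¹' A := by
    ext x
    have hx := sq_add_norm_sq_splitFirstCoord m x
    rw [splitFirstCoord_fst] at hx
    simp only [mem_ofPred_eq, mem_preimage, A, splitFirstCoord_fst, le_sub_iff_add_le', hx,
      sq_le_one_iff₀ (norm_nonneg x)]
  rw [hpre, (measurePreserving_splitFirstCoord m).measure_preimage hA.nullMeasurableSet,
    Measure.volume_eq_prod, Measure.prod_apply hA, ← lintegral_indicator hs]
  congr 1 with t
  by_cases ht : t ∈ s
  · have : Prod.mk t ⁻¹' A = {y | ‖y‖ ^ 2 ≤ 1 - t ^ 2} := by ext y; simp [A, ht]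
    rw [indicator_of_mem ht, this, volume_setOf_norm_sq_le hm]
  · have : Prod.mk t ⁻¹' A = ∅ := by ext y; simp [A, ht]
    rw [indicator_of_notMem ht, this, measure_empty]

theorem sqrt_one_sub_sq_pow_le_exp (m : ℕ) (t : ℝ) :
    √(1 - t ^ 2) ^ m ≤ Real.exp (-(m / 2 * t ^ 2)) :=
  calc √(1 - t ^ 2) ^ m ≤ √(Real.exp (-t ^ 2)) ^ m := by
        gcongr
        linarith [Real.add_one_le_exp (-t ^ 2)]
    _ = Real.exp (-(m / 2 * t ^ 2)) := by
        rw [← Real.exp_half, ← Real.exp_nat_mul]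
        ring_nf

theorem inv_sqrt_two_le_sqrt_one_sub_sq_pow {m : ℕ} {t : ℝ} (ht : t ^ 2 ≤ 1 / (2 * m)) :
    (√2)⁻¹ ≤ √(1 - t ^ 2) ^ m := by
  rcases Nat.eq_zero_or_pos m with rfl | hm
  · simpa using inv_le_one_of_one_le₀ (Real.one_le_sqrt.mpr one_le_two)
  have hm' : (1 : ℝ) ≤ m := Nat.one_le_cast.mpr hm
  rw [le_div_iff₀ (by positivity)] at ht
  have hbernoulli : 1 / 2 ≤ (1 - t ^ 2) ^ m := by
    have := one_add_mul_le_pow (a := -t ^ 2) (by nlinarith) m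
    rw [← sub_eq_add_neg] at this
    nlinarith
  rw [← pow_le_pow_iff_left₀ (by positivity) (by positivity) two_ne_zero, inv_pow,
    Real.sq_sqrt zero_le_two, ← pow_mul, mul_comm, pow_mul, Real.sq_sqrt (by nlinarith)]
  linarith

theorem lintegral_Ioi_mul_exp_neg_mul_sq {a c : ℝ} (ha : 0 < a) (hc : 0 ≤ c) :
    ∫⁻ t in Ioi c, ENNReal.ofReal (t * Real.exp (-(a * t ^ 2)))
      = ENNReal.ofReal (Real.exp (-(a * c ^ 2)) / (2 * a)) := by
  have hderiv (t : ℝ) (_ : t ∈ Ici c) :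
      HasDerivAt (fun t => -(Real.exp (-(a * t ^ 2)) / (2 * a)))
        (t * Real.exp (-(a * t ^ 2))) t := by
    have hinner : HasDerivAt (fun t : ℝ => -(a * t ^ 2)) (-(a * (2 * t))) t :=
      ((hasDerivAt_pow 2 t).const_mul a).neg.congr_deriv (by norm_num)
    refine (hinner.exp.div_const (2 * a)).neg.congr_deriv ?_
    field_simp
  have hnonneg (t : ℝ) (ht : t ∈ Ioi c) : 0 ≤ t * Real.exp (-(a * t ^ 2)) :=
    mul_nonneg (hc.trans (le_of_lt ht)) (Real.exp_nonneg _)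
  have hlim : Tendsto (fun t => -(Real.exp (-(a * t ^ 2)) / (2 * a))) atTop (nhds 0) := by
    have : Tendsto (fun t : ℝ => -(a * t ^ 2)) atTop atBot :=
      tendsto_neg_atTop_atBot.comp ((tendsto_pow_atTop two_ne_zero).const_mul_atTop ha)
    simpa using ((Real.tendsto_exp_atBot.comp this).div_const (2 * a)).neg
  rw [← ofReal_integral_eq_lintegral_ofReal
      (integrableOn_Ioi_deriv_of_nonneg' hderiv hnonneg hlim)
      ((ae_restrict_iff' measurableSet_Ioi).mpr (ae_of_all _ hnonneg)),
    integral_Ioi_of_hasDerivAt_of_nonneg' hderiv hnonneg hlim, zero_sub, neg_neg]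

theorem lintegral_exp_neg_mul_sq_Ioi_le {a ε : ℝ} (ha : 0 < a) (hε : 0 < ε) :
    ∫⁻ t in Ioi ε, ENNReal.ofReal (Real.exp (-(a * t ^ 2)))
      ≤ ENNReal.ofReal (Real.exp (-(a * ε ^ 2)) / (2 * a * ε)) :=
  calc ∫⁻ t in Ioi ε, ENNReal.ofReal (Real.exp (-(a * t ^ 2)))
      ≤ ∫⁻ t in Ioi ε, ENNReal.ofReal ε⁻¹ * ENNReal.ofReal (t * Real.exp (-(a * t ^ 2))) := by
        refine setLIntegral_mono' measurableSet_Ioi fun t ht => ?_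
        rw [← ENNReal.ofReal_mul (by positivity), ← mul_assoc, inv_mul_eq_div]
        gcongr
        exact le_mul_of_one_le_left (Real.exp_nonneg _) ((one_le_div hε).mpr (le_of_lt ht))
    _ = ENNReal.ofReal ε⁻¹ * ENNReal.ofReal (Real.exp (-(a * ε ^ 2)) / (2 * a)) := by
        rw [lintegral_const_mul' _ _ ENNReal.ofReal_ne_top,
          lintegral_Ioi_mul_exp_neg_mul_sq ha hε.le]
    _ = ENNReal.ofReal (Real.exp (-(a * ε ^ 2)) / (2 * a * ε)) := by
        rw [← ENNReal.ofReal_mul (by positivity)]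
        congr 1
        field_simp

theorem inv_sqrt_mul_volume_ball_le_volume_closedBall_succ {m : ℕ} (hm : m ≠ 0) :
    ENNReal.ofReal (√m)⁻¹ * volume (ball (0 : EuclideanSpace ℝ (Fin m)) 1)
      ≤ volume (closedBall (0 : EuclideanSpace ℝ (Fin (m + 1))) 1) := by
  set V := volume (ball (0 : EuclideanSpace ℝ (Fin m)) 1)
  set δ : ℝ := (√(2 * m))⁻¹ with hδdef
  have hδ : δ ^ 2 = 1 / (2 * m) := by
    rw [inv_pow, Real.sq_sqrt (by positivity), one_div]
  have hwidth : (√m)⁻¹ = (√2)⁻¹ * (δ - -δ) := by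
    rw [hδdef, Real.sqrt_mul zero_le_two]
    field_simp
    rw [Real.sq_sqrt zero_le_two]
    ring
  calc ENNReal.ofReal (√m)⁻¹ * V = ∫⁻ _ in Icc (-δ) δ, ENNReal.ofReal (√2)⁻¹ * V := by
        rw [setLIntegral_const, Real.volume_Icc, hwidth, ENNReal.ofReal_mul (by positivity)]
        ring
    _ ≤ ∫⁻ t in Icc (-δ) δ, ENNReal.ofReal (√(1 - t ^ 2) ^ m) * V := by
        refine setLIntegral_mono' measurableSet_Icc fun t ht => ?_
        gcongr
        exact inv_sqrt_two_le_sqrt_one_sub_sq_pow (hδ ▸ sq_le_sq' ht.1 ht.2)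
    _ = volume {x : EuclideanSpace ℝ (Fin (m + 1)) | x 0 ∈ Icc (-δ) δ ∧ ‖x‖ ≤ 1} :=
        (volume_firstCoord_mem_inter_unitBall hm measurableSet_Icc).symm
    _ ≤ volume (closedBall (0 : EuclideanSpace ℝ (Fin (m + 1))) 1) :=
        measure_mono fun x hx => mem_closedBall_zero_iff.mpr hx.2

theorem volume_firstCoord_gt_inter_unitBall_le {m : ℕ} (hm : m ≠ 0) {ε : ℝ} (hε : 0 < ε) :
    volume {x : EuclideanSpace ℝ (Fin (m + 1)) | x 0 ∈ Ioi ε ∧ ‖x‖ ≤ 1}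
      ≤ ENNReal.ofReal (Real.exp (-(m / 2 * ε ^ 2)) / (m * ε))
          * volume (ball (0 : EuclideanSpace ℝ (Fin m)) 1) := by
  set V := volume (ball (0 : EuclideanSpace ℝ (Fin m)) 1)
  calc volume {x : EuclideanSpace ℝ (Fin (m + 1)) | x 0 ∈ Ioi ε ∧ ‖x‖ ≤ 1}
      = ∫⁻ t in Ioi ε, ENNReal.ofReal (√(1 - t ^ 2) ^ m) * V :=
        volume_firstCoord_mem_inter_unitBall hm measurableSet_Ioi
    _ ≤ ∫⁻ t in Ioi ε, ENNReal.ofReal (Real.exp (-(m / 2 * t ^ 2))) * V := by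
        gcongr with t
        exact sqrt_one_sub_sq_pow_le_exp m t
    _ = (∫⁻ t in Ioi ε, ENNReal.ofReal (Real.exp (-(m / 2 * t ^ 2)))) * V :=
        lintegral_mul_const V (by fun_prop)
    _ ≤ ENNReal.ofReal (Real.exp (-(m / 2 * ε ^ 2)) / (2 * (m / 2) * ε)) * V := by
        gcongr
        exact lintegral_exp_neg_mul_sq_Ioi_le (by positivity) hε
    _ = ENNReal.ofReal (Real.exp (-(m / 2 * ε ^ 2)) / (m * ε)) * V := by
        rw [mul_div_cancel₀ _ two_ne_zero]

theorem volume_abs_firstCoord_gt_inter_unitBall_le (m : ℕ) (ε : ℝ) :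
    volume {x : EuclideanSpace ℝ (Fin (m + 1)) | x ∈ closedBall 0 1 ∧ ε < |x 0|}
      ≤ 2 * volume {x : EuclideanSpace ℝ (Fin (m + 1)) | x 0 ∈ Ioi ε ∧ ‖x‖ ≤ 1} := by
  set S := {x : EuclideanSpace ℝ (Fin (m + 1)) | x 0 ∈ Ioi ε ∧ ‖x‖ ≤ 1}
  have hcover : {x : EuclideanSpace ℝ (Fin (m + 1)) | x ∈ closedBall 0 1 ∧ ε < |x 0|}
      ⊆ S ∪ -S := by
    rintro x ⟨hx, hεx⟩
    rw [mem_closedBall_zero_iff] at hx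
    rcases lt_abs.mp hεx with h | h
    · exact Or.inl ⟨h, hx⟩
    · exact Or.inr ⟨show ε < -x 0 from h, by rwa [norm_neg]⟩
  calc _ ≤ volume (S ∪ -S) := measure_mono hcover
    _ ≤ volume S + volume (-S) := measure_union_le _ _
    _ = 2 * volume S := by rw [Measure.measure_neg, two_mul]

theorem waist_concentration_complement (d : ℕ) (hd : 3 ≤ d) (ε : ℝ) (hε : 0 < ε) :
    volume {x : EuclideanSpace ℝ (Fin d) |
        x ∈ closedBall 0 1 ∧ ε < |x ⟨0, by omega⟩|} /
      volume (closedBall (0 : EuclideanSpace ℝ (Fin d)) 1)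
      ≤ ENNReal.ofReal
          (2 / (ε * Real.sqrt (d - 1)) * Real.exp (-(ε ^ 2 * (d - 1) / 2))) := by
  obtain ⟨m, rfl⟩ : ∃ m, d = m + 1 := ⟨d - 1, by omega⟩
  have hm : m ≠ 0 := by omega
  rw [show ((m + 1 : ℕ) : ℝ) - 1 = m by push_cast; ring]
  set q := Real.exp (-(m / 2 * ε ^ 2)) / (m * ε) with hq
  set V := volume (ball (0 : EuclideanSpace ℝ (Fin m)) 1)
  have hnum := (volume_abs_firstCoord_gt_inter_unitBall_le m ε).trans
    (mul_le_mul_right (volume_firstCoord_gt_inter_unitBall_le hm hε) 2)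
  calc _ ≤ 2 * (ENNReal.ofReal q * V) / (ENNReal.ofReal (√m)⁻¹ * V) :=
        ENNReal.div_le_div hnum (inv_sqrt_mul_volume_ball_le_volume_closedBall_succ hm)
    _ = ENNReal.ofReal (2 * q / (√m)⁻¹) := by
        rw [← mul_assoc, ENNReal.mul_div_mul_right _ _ (measure_ball_pos volume 0 one_pos).ne'
          measure_ball_lt_top.ne, ← ENNReal.ofReal_ofNat 2, ← ENNReal.ofReal_mul zero_le_two,
          ENNReal.ofReal_div_of_pos (by positivity)]
    _ = _ := by
        have hsqrt : √(m : ℝ) ^ 2 = m := Real.sq_sqrt (Nat.cast_nonneg m)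
        rw [hq]
        congr 1
        field_simp
        rw [hsqrt]
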